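/- arXiv:1308.0997 — 3 statements merged into one kernel-verified Lean document; each statement's English description precedes it below -/
import Mathlib

section
/- Let R be a commutative ring that is a ℚ-algebra and let a, b ∈ R. With f₁, f₂, f₃ as below, the identity (f₂′·f₁ − f₁′·f₂)·f₃ = f₂′ holds in the formal power series ring R[[x]]. -/
/-!
With `t = x²/4` one has `f₁ = ₂F₁(a, b; 1/2; t)`, `f₂ = x · ₂F₁(a + 1/2, b + 1/2; 3/2; t)` and
`f₃ = ₂F₁(-a, -b; 1/2; t)`, so `f₁, f₂` solve `(4 - x²) y'' = 4ab y + (2(a+b)+1) x y'` and `f₃`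
solves the same equation with `(a, b)` replaced by `(-a, -b)`. The Wronskian
`W = f₂' f₁ - f₁' f₂` then satisfies `(4 - x²) W' = (2(a+b)+1) x W`, and this first-order
equation is exactly what makes `W f₃` solve the equation obtained by differentiating the one for
`f₂`, i.e. the equation of `f₂'`. Both sides have constant term `1` and vanishing linear term, and
over a `ℚ`-algebra a solution is determined by these two coefficients.
-/

open PowerSeries

/-- `f₁ = Σ_{k≥0} (∏_{r=1}^{k} (a+r−1)(b+r−1)) · x^{2k}/(2k)!` as a formal power series:
its coefficient at `x^n` is `(∏_{r=0}^{n/2-1} (a+r)(b+r))/n!` if `n` is even, and `0` otherwise. -/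
noncomputable def f₁ {R : Type*} [CommRing R] [Algebra ℚ R] (a b : R) : R⟦X⟧ :=
  PowerSeries.mk fun n =>
    if n % 2 = 0 then
      ((Nat.factorial n : ℚ))⁻¹ • ∏ r ∈ Finset.range (n / 2), ((a + (r : R)) * (b + (r : R)))
    else 0

/-- `f₂ = Σ_{k≥0} (∏_{r=1}^{k} (a+r−1/2)(b+r−1/2)) · x^{2k+1}/(2k+1)!`. -/
noncomputable def f₂ {R : Type*} [CommRing R] [Algebra ℚ R] (a b : R) : R⟦X⟧ :=
  PowerSeries.mk fun n =>
    if n % 2 = 1 then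
      ((Nat.factorial n : ℚ))⁻¹ • ∏ r ∈ Finset.range (n / 2),
        ((a + (r : R) + algebraMap ℚ R (1/2)) * (b + (r : R) + algebraMap ℚ R (1/2)))
    else 0

/-- `f₃ = Σ_{k≥0} (∏_{r=1}^{k} (a−r+1)(b−r+1)) · x^{2k}/(2k)!`. -/
noncomputable def f₃ {R : Type*} [CommRing R] [Algebra ℚ R] (a b : R) : R⟦X⟧ :=
  PowerSeries.mk fun n =>
    if n % 2 = 0 then
      ((Nat.factorial n : ℚ))⁻¹ • ∏ r ∈ Finset.range (n / 2), ((a - (r : R)) * (b - (r : R)))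
    else 0

open scoped Nat

section ODE

variable {R : Type*} [CommRing R]

def SolvesHypergeomODE (c d : R) (y : R⟦X⟧) : Prop :=
  (C 4 - X ^ 2) * d⁄dX R (d⁄dX R y) = C c * y + C d * (X * d⁄dX R y)

theorem coeff_X_mul_derivative (f : R⟦X⟧) (n : ℕ) :
    coeff n (X * d⁄dX R f) = n * coeff n f := by
  cases n with
  | zero => simp
  | succ n => rw [coeff_succ_X_mul, coeff_derivative]; push_cast; ring

theorem coeff_X_sq_mul_derivative_derivative (f : R⟦X⟧) (n : ℕ) :
    coeff n (X ^ 2 * d⁄dX R (d⁄dX R f)) = n * (n - 1) * coeff n f := by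
  match n with
  | 0 | 1 => simp [coeff_X_pow_mul']
  | n + 2 => rw [coeff_X_pow_mul, coeff_derivative, coeff_derivative]; push_cast; ring

theorem solvesHypergeomODE_iff {c d : R} {y : R⟦X⟧} :
    SolvesHypergeomODE c d y ↔
      ∀ n : ℕ, 4 * ((n + 2) * (n + 1)) * coeff (n + 2) y = (n * (n - 1 + d) + c) * coeff n y := by
  rw [SolvesHypergeomODE, PowerSeries.ext_iff]
  refine forall_congr' fun n => ?_
  rw [sub_mul, map_sub, map_add, coeff_C_mul, coeff_C_mul, coeff_C_mul,
    coeff_X_sq_mul_derivative_derivative, coeff_X_mul_derivative, coeff_derivative,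
    coeff_derivative]
  push_cast
  constructor <;> intro h <;> linear_combination h

theorem SolvesHypergeomODE.derivative {c d : R} {y : R⟦X⟧} (h : SolvesHypergeomODE c d y) :
    SolvesHypergeomODE (c + d) (d + 2) (d⁄dX R y) := by
  rw [solvesHypergeomODE_iff] at h ⊢
  intro n
  have hn := h (n + 1)
  simp only [coeff_derivative]
  push_cast at hn ⊢
  linear_combination (n + 1 : R) * hn

theorem SolvesHypergeomODE.wronskian {c d : R} {p q : R⟦X⟧} (hp : SolvesHypergeomODE c d p)
    (hq : SolvesHypergeomODE c d q) :
    (C 4 - X ^ 2) * d⁄dX R (d⁄dX R q * p - d⁄dX R p * q) =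
      C d * (X * (d⁄dX R q * p - d⁄dX R p * q)) := by
  unfold SolvesHypergeomODE at hp hq
  simp only [map_sub, Derivation.leibniz, smul_eq_mul]
  linear_combination p * hq - q * hp

theorem solvesHypergeomODE_of_first_order {k : R} {w : R⟦X⟧}
    (hw : (C 4 - X ^ 2) * d⁄dX R w = C k * (X * w)) : SolvesHypergeomODE k (k + 2) w := by
  have h := congrArg (d⁄dX R) hw
  simp only [pow_two, map_sub, Derivation.leibniz, smul_eq_mul, derivative_C, derivative_X] at h
  simp only [SolvesHypergeomODE, map_add, map_ofNat] at h ⊢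
  linear_combination h

theorem SolvesHypergeomODE.first_order_mul {c k : R} {w y : R⟦X⟧}
    (hy : SolvesHypergeomODE c (2 - k) y) (hw : (C 4 - X ^ 2) * d⁄dX R w = C k * (X * w)) :
    SolvesHypergeomODE (c + k) (k + 2) (w * y) := by
  have hw₂ := solvesHypergeomODE_of_first_order hw
  unfold SolvesHypergeomODE at hy hw₂ ⊢
  simp only [Derivation.leibniz, map_add, smul_eq_mul, map_sub, map_ofNat] at hw hy hw₂ ⊢
  linear_combination y * hw₂ + 2 * d⁄dX R y * hw + w * hy

variable [Algebra ℚ R]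

theorem isUnit_natCast_of_ne_zero {n : ℕ} (hn : n ≠ 0) : IsUnit (n : R) := by
  simpa using (Ne.isUnit (Nat.cast_ne_zero.2 hn : (n : ℚ) ≠ 0)).map (algebraMap ℚ R)

theorem SolvesHypergeomODE.ext {c d : R} {p q : R⟦X⟧} (hp : SolvesHypergeomODE c d p)
    (hq : SolvesHypergeomODE c d q) (h₀ : coeff 0 p = coeff 0 q) (h₁ : coeff 1 p = coeff 1 q) :
    p = q := by
  rw [solvesHypergeomODE_iff] at hp hq
  ext n
  induction n using Nat.twoStepInduction with
  | zero => exact h₀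
  | one => exact h₁
  | more n ih _ =>
    have hunit : IsUnit (4 * ((n + 2) * (n + 1)) : R) := by
      simpa using isUnit_natCast_of_ne_zero (R := R) (n := 4 * ((n + 2) * (n + 1))) (by positivity)
    exact hunit.mul_left_cancel (by rw [hp, hq, ih])

theorem solvesHypergeomODE_mk {c d : R} {u : ℕ → R}
    (hu : ∀ n : ℕ, 4 * u (n + 2) = (n * (n - 1 + d) + c) * u n) :
    SolvesHypergeomODE c d (mk fun n => ((n ! : ℚ))⁻¹ • u n) := by
  rw [solvesHypergeomODE_iff]
  intro n
  have hfact : ((n + 2) * (n + 1) : ℚ) * ((n + 2) ! : ℚ)⁻¹ = (n ! : ℚ)⁻¹ := by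
    rw [Nat.factorial_succ, Nat.factorial_succ]
    field_simp
    push_cast
    ring
  have := congrArg (algebraMap ℚ R) hfact
  simp only [coeff_mk, Algebra.smul_def, map_mul, map_add, map_natCast, map_ofNat,
    map_one] at this ⊢
  linear_combination (4 * u (n + 2)) * this + algebraMap ℚ R (n ! : ℚ)⁻¹ * hu n

end ODE

section HypergeometricSeries

variable {R : Type*} [CommRing R] [Algebra ℚ R]

theorem solvesHypergeomODE_f₁ (a b : R) :
    SolvesHypergeomODE (4 * (a * b)) (2 * (a + b) + 1) (f₁ a b) := by
  convert solvesHypergeomODE_mk (u := fun n =>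
    if n % 2 = 0 then ∏ r ∈ Finset.range (n / 2), ((a + (r : R)) * (b + (r : R))) else 0) ?_
  · simp only [f₁, smul_ite, smul_zero]
  intro n
  rcases Nat.even_or_odd' n with ⟨m, rfl | rfl⟩
  · simp only [show (2 * m + 2) % 2 = 0 by omega, show (2 * m + 2) / 2 = m + 1 by omega,
      show 2 * m % 2 = 0 by omega, show 2 * m / 2 = m by omega, if_true, Finset.prod_range_succ]
    push_cast
    ring
  · simp [show (2 * m + 1 + 2) % 2 = 1 by omega, show (2 * m + 1) % 2 = 1 by omega]

theorem solvesHypergeomODE_f₂ (a b : R) :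
    SolvesHypergeomODE (4 * (a * b)) (2 * (a + b) + 1) (f₂ a b) := by
  set half : R := algebraMap ℚ R (1 / 2)
  have two_mul_half : 2 * half = 1 := by
    rw [← map_ofNat (algebraMap ℚ R), ← map_mul]; norm_num
  convert solvesHypergeomODE_mk (u := fun n =>
    if n % 2 = 1 then ∏ r ∈ Finset.range (n / 2), ((a + (r : R) + half) * (b + (r : R) + half))
    else 0) ?_
  · simp only [f₂, smul_ite, smul_zero, half]
  intro n
  rcases Nat.even_or_odd' n with ⟨m, rfl | rfl⟩
  · simp [show (2 * m + 2) % 2 = 0 by omega, show 2 * m % 2 = 0 by omega]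
  · simp only [show (2 * m + 1 + 2) % 2 = 1 by omega, show (2 * m + 1 + 2) / 2 = m + 1 by omega,
      show (2 * m + 1) % 2 = 1 by omega, show (2 * m + 1) / 2 = m by omega, if_true,
      Finset.prod_range_succ]
    push_cast
    linear_combination (∏ r ∈ Finset.range m, ((a + (r : R) + half) * (b + (r : R) + half))) *
      (2 * (a + b) + 4 * m + 2 * half + 1) * two_mul_half

theorem f₃_eq_f₁_neg (a b : R) : f₃ a b = f₁ (-a) (-b) := by
  simp only [f₃, f₁]
  congr! 4 with n
  exact Finset.prod_congr rfl fun r _ => by ring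

end HypergeometricSeries

/-- Equation (22) of the Lemma of Appendix B: `(f₂′·f₁ − f₁′·f₂)·f₃ = f₂′` in `R⟦x⟧`. -/
theorem stmt0 {R : Type*} [CommRing R] [Algebra ℚ R] (a b : R) :
    (d⁄dX R (f₂ a b) * f₁ a b - d⁄dX R (f₁ a b) * f₂ a b) * f₃ a b = d⁄dX R (f₂ a b) := by
  have h₃ : SolvesHypergeomODE (4 * (a * b)) (2 - (2 * (a + b) + 1)) (f₃ a b) := by
    rw [f₃_eq_f₁_neg]
    convert solvesHypergeomODE_f₁ (-a) (-b) using 1 <;> ring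
  have hW := (solvesHypergeomODE_f₁ a b).wronskian (solvesHypergeomODE_f₂ a b)
  refine (h₃.first_order_mul hW).ext (solvesHypergeomODE_f₂ a b).derivative ?_ ?_
  · simp [coeff_mul, f₁, f₂, f₃, coeff_derivative]
  · simp [coeff_mul, f₁, f₂, f₃, coeff_derivative, Finset.Nat.antidiagonal_succ]
end

section
/- Let R be a commutative ring that is a ℚ-algebra and let a, b ∈ R. The power series f₂ satisfies the formal differential equation (x²/4 − 1)·f₂″ + (1/4 + (a+b)/2)·x·f₂′ + a·b·f₂ = 0 in R[[x]]. -/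
/- The operator sends `xⁿ` to `(a + n/2)(b + n/2) xⁿ - n(n - 1) xⁿ⁻²`, so comparing coefficients of
`xⁿ` turns the equation into the recurrence `(n + 1)(n + 2) uₙ₊₂ = (a + n/2)(b + n/2) uₙ`; the
coefficients `u₂ₘ₊₁ = ∏_{r<m} (a + r + 1/2)(b + r + 1/2) / (2m + 1)!` of `f₂` satisfy it by
construction, and its even coefficients vanish. -/

open PowerSeries

noncomputable def f₄ {R : Type*} [CommRing R] [Algebra ℚ R] (a b : R) : R⟦X⟧ :=
  PowerSeries.mk fun n =>
    if n % 2 = 1 then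
      ((Nat.factorial n : ℚ))⁻¹ • ∏ r ∈ Finset.range (n / 2),
        ((a - (r : R) - algebraMap ℚ R (1/2)) * (b - (r : R) - algebraMap ℚ R (1/2)))
    else 0

namespace PowerSeries

theorem coeff_X_pow_mul_iterate_derivative {R : Type*} [CommSemiring R] (f : R⟦X⟧) (n k : ℕ) :
    coeff n (X ^ k * (d⁄dX R)^[k] f) = n.descFactorial k * coeff n f := by
  rw [coeff_X_pow_mul']
  split_ifs with hkn
  · rw [coeff_iterate_derivative, Nat.sub_add_cancel hkn, ← Nat.add_descFactorial_eq_ascFactorial,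
      Nat.sub_add_cancel hkn]
  · rw [Nat.descFactorial_eq_zero_iff_lt.mpr (by omega), Nat.cast_zero, zero_mul]

end PowerSeries

section
variable {R : Type*} [CommRing R] [Algebra ℚ R]

theorem coeff_hypergeometric_operator (a b : R) (f : R⟦X⟧) (n : ℕ) :
    coeff n (((1/4 : ℚ) • (X : R⟦X⟧) ^ 2 - 1) * d⁄dX R (d⁄dX R f) +
      ((1/4 : ℚ) • (1 : R⟦X⟧) + (1/2 : ℚ) • C (a + b)) * X * d⁄dX R f + C (a * b) * f) =
    (a + algebraMap ℚ R (n / 2)) * (b + algebraMap ℚ R (n / 2)) * coeff n f -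
      ((n + 1) * (n + 2) : R) * coeff (n + 2) f := by
  have h2 := coeff_X_pow_mul_iterate_derivative f n 2
  have h1 := coeff_X_pow_mul_iterate_derivative f n 1
  simp only [Function.iterate_succ, Function.iterate_zero, Function.comp_apply, id, pow_one,
    Nat.descFactorial_one, Nat.cast_descFactorial_two] at h1 h2
  have hq (q : ℚ) (g : R⟦X⟧) : q • g = C (algebraMap ℚ R q) * g := by
    rw [← smul_eq_C_mul, algebraMap_smul]
  have expand : ((1/4 : ℚ) • (X : R⟦X⟧) ^ 2 - 1) * d⁄dX R (d⁄dX R f) +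
      ((1/4 : ℚ) • (1 : R⟦X⟧) + (1/2 : ℚ) • C (a + b)) * X * d⁄dX R f + C (a * b) * f =
      C (algebraMap ℚ R (1/4)) * (X ^ 2 * d⁄dX R (d⁄dX R f)) - d⁄dX R (d⁄dX R f) +
      C (algebraMap ℚ R (1/4) + algebraMap ℚ R (1/2) * (a + b)) * (X * d⁄dX R f) +
      C (a * b) * f := by
    simp only [hq, map_add, map_mul]
    ring
  rw [expand, map_add, map_add, map_sub, coeff_C_mul, coeff_C_mul, coeff_C_mul, h1, h2,
    coeff_derivative, coeff_derivative]
  have half : algebraMap ℚ R (n / 2) = n * algebraMap ℚ R (1 / 2) := by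
    rw [div_eq_mul_one_div (n : ℚ), map_mul, map_natCast]
  have quarter : algebraMap ℚ R (1 / 4) = algebraMap ℚ R (1 / 2) * algebraMap ℚ R (1 / 2) := by
    rw [← map_mul]; norm_num
  rw [half, quarter]
  push_cast
  ring

theorem coeff_f₂_two_mul (a b : R) (m : ℕ) : coeff (2 * m) (f₂ a b) = 0 := by
  simp [f₂]

theorem coeff_f₂_two_mul_add_one (a b : R) (m : ℕ) :
    coeff (2 * m + 1) (f₂ a b) = ((2 * m + 1).factorial : ℚ)⁻¹ • ∏ r ∈ Finset.range m,
      ((a + r + algebraMap ℚ R (1 / 2)) * (b + r + algebraMap ℚ R (1 / 2))) := by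
  have hmod : (2 * m + 1) % 2 = 1 := by omega
  have hdiv : (2 * m + 1) / 2 = m := by omega
  simp only [f₂, coeff_mk, hmod, hdiv, if_true]

theorem coeff_f₂_recurrence (a b : R) (n : ℕ) :
    ((n + 1) * (n + 2) : R) * coeff (n + 2) (f₂ a b) =
      (a + algebraMap ℚ R (n / 2)) * (b + algebraMap ℚ R (n / 2)) * coeff n (f₂ a b) := by
  obtain ⟨m, rfl | rfl⟩ := Nat.even_or_odd' n
  · rw [show 2 * m + 2 = 2 * (m + 1) by ring, coeff_f₂_two_mul, coeff_f₂_two_mul, mul_zero,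
      mul_zero]
  rw [show 2 * m + 1 + 2 = 2 * (m + 1) + 1 by ring, coeff_f₂_two_mul_add_one,
    coeff_f₂_two_mul_add_one, Finset.prod_range_succ]
  have hfact : ((2 * m + 2) * (2 * m + 3) : ℚ) * ((2 * (m + 1) + 1).factorial : ℚ)⁻¹ =
      ((2 * m + 1).factorial : ℚ)⁻¹ := by
    rw [show 2 * (m + 1) + 1 = 2 * m + 1 + 1 + 1 by ring, Nat.factorial_succ, Nat.factorial_succ]
    have := Nat.factorial_ne_zero (2 * m + 1)
    field_simp
    push_cast
    ring
  have hhalf : algebraMap ℚ R ((2 * m + 1 : ℕ) / 2) = m + algebraMap ℚ R (1 / 2) := by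
    rw [← map_natCast (algebraMap ℚ R) m, ← map_add]
    congr 1
    push_cast
    ring
  rw [hhalf, Algebra.smul_def, Algebra.smul_def, ← hfact]
  simp only [map_mul, map_add, map_natCast, map_ofNat, Nat.cast_mul, Nat.cast_ofNat, Nat.cast_succ]
  ring

end

/-- `f₂` satisfies `(x²/4 − 1)·f₂″ + (1/4 + (a+b)/2)·x·f₂′ + a·b·f₂ = 0`. -/
theorem stmt3 {R : Type*} [CommRing R] [Algebra ℚ R] (a b : R) :
    ((1/4 : ℚ) • (PowerSeries.X : R⟦X⟧) ^ 2 - 1) * d⁄dX R (d⁄dX R (f₂ a b)) +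
      ((1/4 : ℚ) • (1 : R⟦X⟧) + (1/2 : ℚ) • C (a + b)) * PowerSeries.X * d⁄dX R (f₂ a b) +
      C (a * b) * f₂ a b = 0 := by
  ext n
  rw [coeff_hypergeometric_operator, ← coeff_f₂_recurrence, map_zero, sub_self]
end

section
/- Let G be a finite subgroup of SL(2, ℂ), let ρ₁ denote the two-dimensional complex representation of G given by the inclusion G ⊆ SL(2, ℂ) acting on ℂ², and let V be a finite-dimensional irreducible complex representation of G. If the tensor product representation V ⊗ ρ₁ has a nonzero G-invariant vector (equivalently, contains the trivial representation as a summand), then V is a faithful representation of G. -/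
/-!
If `ρ g = 1`, then `g` acts on `W ⊗ ℂ²` as `id ⊗ g`; since `W` is flat over `ℂ`, a nonzero invariant
vector forces `g` to fix a nonzero vector of `ℂ²`. An element of `SL(2)` with eigenvalue `1` has
trace `2`, so it is either `1` or parabolic (a nontrivial unipotent), and in characteristic zero
parabolic elements have infinite order.
-/

open Matrix TensorProduct

/-- The standard 2-dimensional representation `ρ₁` of a subgroup `G` of `SL(2, ℂ)`, given by
the inclusion `G ⊆ SL(2, ℂ)` acting on `ℂ²`. -/
noncomputable def rho₁ (G : Subgroup (SpecialLinearGroup (Fin 2) ℂ)) :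
    Representation ℂ G (Fin 2 → ℂ) :=
  (LinearEquiv.automorphismGroup.toLinearMapMonoidHom).comp
    ((SpecialLinearGroup.toLin' (n := Fin 2) (R := ℂ)).comp G.subtype)

namespace Matrix

variable {K : Type*} [Field K]

lemma trace_eq_two_of_det_eq_one_of_mulVec_eq_self {m : Matrix (Fin 2) (Fin 2) K}
    (hdet : m.det = 1) {x : Fin 2 → K} (hx : x ≠ 0) (hmx : m *ᵥ x = x) : m.trace = 2 := by
  have hsing : (m - 1).det = 0 :=
    exists_mulVec_eq_zero_iff.mp ⟨x, hx, by rw [sub_mulVec, hmx, one_mulVec, sub_self]⟩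
  rw [det_fin_two] at hdet hsing
  simp only [sub_apply, one_apply_eq, one_apply_ne zero_ne_one, one_apply_ne one_ne_zero,
    sub_zero] at hsing
  rw [trace_fin_two]
  linear_combination hdet - hsing

lemma eq_one_or_isParabolic_of_det_eq_one_of_mulVec_eq_self {m : Matrix (Fin 2) (Fin 2) K}
    (hdet : m.det = 1) {x : Fin 2 → K} (hx : x ≠ 0) (hmx : m *ᵥ x = x) :
    m = 1 ∨ m.IsParabolic := by
  refine or_iff_not_imp_left.mpr fun hm1 => ⟨?_, ?_⟩
  · rintro ⟨a, rfl⟩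
    have ha : (a - 1) • x = 0 := by
      rw [sub_smul, one_smul, sub_eq_zero]
      simpa [scalar_apply, mulVec_diagonal, funext_iff] using hmx
    rw [sub_eq_zero.mp ((smul_eq_zero.mp ha).resolve_right hx), map_one] at hm1
    exact hm1 rfl
  · rw [discr_fin_two, trace_eq_two_of_det_eq_one_of_mulVec_eq_self hdet hx hmx, hdet]
    norm_num

lemma GeneralLinearGroup.IsParabolic.not_isOfFinOrder [CharZero K] {g : GL (Fin 2) K}
    (hg : g.IsParabolic) : ¬ IsOfFinOrder g := by
  intro hfin
  exact (hg.pow (orderOf_pos_iff.mpr hfin).ne').1 ⟨1, by simp [pow_orderOf_eq_one]⟩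

lemma SpecialLinearGroup.eq_one_of_isOfFinOrder_of_mulVec_eq_self [CharZero K]
    {g : SpecialLinearGroup (Fin 2) K} (hg : IsOfFinOrder g) {x : Fin 2 → K} (hx : x ≠ 0)
    (hgx : (g : Matrix (Fin 2) (Fin 2) K) *ᵥ x = x) : g = 1 := by
  have hpar : ¬ (g : Matrix (Fin 2) (Fin 2) K).IsParabolic := fun hpar =>
    GeneralLinearGroup.IsParabolic.not_isOfFinOrder (g := toGL g) hpar (toGL.isOfFinOrder hg)
  exact Subtype.ext <|
    (eq_one_or_isParabolic_of_det_eq_one_of_mulVec_eq_self g.prop hx hgx).resolve_right hpar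

end Matrix

lemma LinearMap.exists_ne_zero_apply_eq_self_of_lTensor_apply_eq_self {R M N : Type*}
    [CommRing R] [AddCommGroup M] [Module R M] [AddCommGroup N] [Module R N] [Module.Flat R M]
    {f : N →ₗ[R] N} {v : M ⊗[R] N} (hv : v ≠ 0) (hfv : f.lTensor M v = v) :
    ∃ x, x ≠ 0 ∧ f x = x := by
  by_contra! hfix
  have hinj : Function.Injective (f - LinearMap.id : N →ₗ[R] N) := by
    rw [← LinearMap.ker_eq_bot, Submodule.eq_bot_iff]
    intro x hx
    by_contra hx0
    exact hfix x hx0 (sub_eq_zero.mp hx)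
  apply hv
  apply Module.Flat.lTensor_preserves_injective_linearMap (M := M) _ hinj
  rw [map_zero, lTensor_sub, lTensor_id, sub_apply, hfv, id_apply, sub_self]

theorem stmt15_general (G : Subgroup (SpecialLinearGroup (Fin 2) ℂ)) [Finite G]
    (W : Type*) [AddCommGroup W] [Module ℂ W]
    (ρ : Representation ℂ G W)
    (hinv : ∃ v : W ⊗[ℂ] (Fin 2 → ℂ), v ≠ 0 ∧ ∀ g : G, (ρ.tprod (rho₁ G)) g v = v) :
    Function.Injective ρ := by
  obtain ⟨v, hv0, hv⟩ := hinv
  refine (injective_iff_map_eq_one ρ).mpr fun g hg => ?_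
  have hfix : (rho₁ G g).lTensor W v = v := by
    simpa only [Representation.tprod_apply, hg, Module.End.one_eq_id, LinearMap.lTensor_def]
      using hv g
  obtain ⟨x, hx0, hgx⟩ := LinearMap.exists_ne_zero_apply_eq_self_of_lTensor_apply_eq_self hv0 hfix
  refine Subtype.ext <| SpecialLinearGroup.eq_one_of_isOfFinOrder_of_mulVec_eq_self
    (G.subtype.isOfFinOrder (isOfFinOrder_of_finite g)) hx0 ?_
  simpa [rho₁, SpecialLinearGroup.toLin'_apply, toLin'_apply] using hgx

/-- Let `G ⊆ SL(2, ℂ)` be a finite subgroup with its standard representation `ρ₁` on `ℂ²`, and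
let `ρ` be a finite-dimensional irreducible complex representation of `G` on `W`. If `W ⊗ ℂ²`
(with the tensor-product representation) has a nonzero `G`-invariant vector, then `ρ` is
faithful. -/
theorem stmt15 (G : Subgroup (SpecialLinearGroup (Fin 2) ℂ)) [Finite G]
    (W : Type*) [AddCommGroup W] [Module ℂ W] [FiniteDimensional ℂ W] [Nontrivial W]
    (ρ : Representation ℂ G W)
    (hirr : ∀ U : Submodule ℂ W, (∀ g : G, ∀ w ∈ U, ρ g w ∈ U) → U = ⊥ ∨ U = ⊤)
    (hinv : ∃ v : W ⊗[ℂ] (Fin 2 → ℂ), v ≠ 0 ∧ ∀ g : G, (ρ.tprod (rho₁ G)) g v = v) :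
    Function.Injective ρ :=
  stmt15_general G W ρ hinv
end
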